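/- Derivation is sound for the existential suffix implication: for all a ∈ D and infinite words w, a·w satisfies R ⟨ φ (existential suffix implication) if and only if (a ∈ L(R) and a·w satisfies φ) or w satisfies leaf(δ(R),a) ⟨ φ; where a·w ⊨ R ⟨ φ means there exist a finite word u and infinite word v with a·w = u·v, u·v(0) ∈ L(R), and v ⊨ φ. -/

import Mathlib

open Classical

/-- An effective Boolean algebra over a domain `D` with predicates `P`. -/
structure EBA (D : Type*) (P : Type*) where
  den : P → Set D
  bot : P
  top : P
  band : P → P → P
  bor : P → P → P
  bnot : P → P
  den_bot : den bot = ∅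
  den_top : den top = Set.univ
  den_and : ∀ α β, den (band α β) = den α ∩ den β
  den_or : ∀ α β, den (bor α β) = den α ∪ den β
  den_not : ∀ α, den (bnot α) = (den α)ᶜ

/-- Transition terms over predicates `P` with leaves in `Φ`:
nested if-then-else expressions. -/
inductive TT (P : Type*) (Φ : Type*) where
  | leaf : Φ → TT P Φ
  | ite : P → TT P Φ → TT P Φ → TT P Φ

/-- The leaf of a transition term for an element `a` of the domain. -/
noncomputable def leafOf {D P Φ : Type*} (E : EBA D P) : TT P Φ → D → Φ
  | .leaf φ, _ => φ
  | .ite α f g, a => if a ∈ E.den α then leafOf E f a else leafOf E g a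

/-- Lifting of a binary operation on leaves to transition terms. -/
def liftBin {P Φ Φ' : Type*} (op : Φ → Φ → Φ') : TT P Φ → TT P Φ → TT P Φ'
  | .ite α f g, h => .ite α (liftBin op f h) (liftBin op g h)
  | .leaf φ, .ite α f g => .ite α (liftBin op (.leaf φ) f) (liftBin op (.leaf φ) g)
  | .leaf φ, .leaf ψ => .leaf (op φ ψ)

/-- Lifting of a unary operation on leaves to transition terms. -/
def liftUn {P Φ Φ' : Type*} (op : Φ → Φ') : TT P Φ → TT P Φ'
  | .leaf φ => .leaf (op φ)
  | .ite α f g => .ite α (liftUn op f) (liftUn op g)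

/-- Extended regular expressions modulo an algebra of predicates `P`. -/
inductive ERE (P : Type*) where
  | pred : P → ERE P
  | eps : ERE P
  | union : ERE P → ERE P → ERE P
  | inter : ERE P → ERE P → ERE P
  | concat : ERE P → ERE P → ERE P
  | star : ERE P → ERE P
  | compl : ERE P → ERE P

/-- The finite-word language of an extended regular expression, where
`den` is the denotation function of the predicate algebra. -/
def lang {D P : Type*} (den : P → Set D) : ERE P → Set (List D)
  | .pred α => {u | ∃ a ∈ den α, u = [a]}
  | .eps => {[]}
  | .union r s => lang den r ∪ lang den s
  | .inter r s => lang den r ∩ lang den s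
  | .concat r s => {u | ∃ x ∈ lang den r, ∃ y ∈ lang den s, u = x ++ y}
  | .star r => {u | ∃ L : List (List D), (∀ x ∈ L, x ∈ lang den r) ∧ u = L.flatten}
  | .compl r => (lang den r)ᶜ

/-- Nullability of an extended regular expression. -/
def nullable {P : Type*} : ERE P → Bool
  | .pred _ => false
  | .eps => true
  | .union r s => nullable r || nullable s
  | .inter r s => nullable r && nullable s
  | .concat r s => nullable r && nullable s
  | .star _ => true
  | .compl r => !nullable r

/-- The symbolic derivative of an extended regular expression:
a transition term with regex leaves. -/
noncomputable def derive {D P : Type*} (E : EBA D P) : ERE P → TT P (ERE P)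
  | .eps => .leaf (.pred E.bot)
  | .pred α => .ite α (.leaf .eps) (.leaf (.pred E.bot))
  | .union r s => liftBin ERE.union (derive E r) (derive E s)
  | .inter r s => liftBin ERE.inter (derive E r) (derive E s)
  | .compl r => liftUn ERE.compl (derive E r)
  | .star r => liftUn (fun t => ERE.concat t (.star r)) (derive E r)
  | .concat r s =>
    if nullable r then
      liftBin ERE.union (liftUn (fun t => ERE.concat t s) (derive E r)) (derive E s)
    else liftUn (fun t => ERE.concat t s) (derive E r)

/-- The `n`-th suffix of an infinite word. -/
def suffix {D : Type*} (w : ℕ → D) (n : ℕ) : ℕ → D := fun i => w (n + i)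

/-- Prepending an element to an infinite word. -/
def consInf {D : Type*} (a : D) (v : ℕ → D) : ℕ → D :=
  fun i => match i with
  | 0 => a
  | n + 1 => v n

/-- Prepending a finite word to an infinite word. -/
def appendInf {D : Type*} : List D → (ℕ → D) → ℕ → D
  | [], v => v
  | a :: u, v => consInf a (appendInf u v)

/-- RLTL modulo `A`: LTL extended with the existential suffix
implication `R ⟨ φ` over extended regular expressions. -/
inductive RLTL (P : Type*) where
  | pred : P → RLTL P
  | not : RLTL P → RLTL P
  | or : RLTL P → RLTL P → RLTL P
  | and : RLTL P → RLTL P → RLTL P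
  | next : RLTL P → RLTL P
  | untl : RLTL P → RLTL P → RLTL P
  | release : RLTL P → RLTL P → RLTL P
  | eimpl : ERE P → RLTL P → RLTL P

/-- Semantics of RLTL over infinite words. -/
def RLTLsat {D P : Type*} (den : P → Set D) : (ℕ → D) → RLTL P → Prop
  | w, .pred α => w 0 ∈ den α
  | w, .not φ => ¬ RLTLsat den w φ
  | w, .or φ ψ => RLTLsat den w φ ∨ RLTLsat den w ψ
  | w, .and φ ψ => RLTLsat den w φ ∧ RLTLsat den w ψ
  | w, .next φ => RLTLsat den (suffix w 1) φ
  | w, .untl φ ψ => ∃ j, RLTLsat den (suffix w j) ψ ∧ ∀ i < j, RLTLsat den (suffix w i) φ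
  | w, .release φ ψ => (∀ j, RLTLsat den (suffix w j) ψ) ∨
      ∃ j, RLTLsat den (suffix w j) φ ∧ ∀ i ≤ j, RLTLsat den (suffix w i) ψ
  | w, .eimpl R φ => ∃ (u : List D) (v : ℕ → D),
      w = appendInf u v ∧ (u ++ [v 0]) ∈ lang den R ∧ RLTLsat den v φ

/-! The derivative satisfies Brzozowski's law `L(leaf(δ(R), a)) = a⁻¹ L(R)`, proved by structural
induction on `R` once one knows that `leafOf` commutes with the lifted operations. A decomposition
`a·w = u·v` either has `u = []`, so that `v = a·w` and the condition on `u·v(0)` reads `[a] ∈ L(R)`,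
or `u = a·u'` with `w = u'·v`, and then `u·v(0) ∈ L(R)` iff `u'·v(0) ∈ a⁻¹ L(R)`. -/

section LeafOf

variable {D P Φ Φ' : Type*} (E : EBA D P)

@[simp] lemma leafOf_leaf (φ : Φ) (a : D) : leafOf E (.leaf φ) a = φ := rfl

@[simp] lemma leafOf_ite (α : P) (f g : TT P Φ) (a : D) :
    leafOf E (.ite α f g) a = if a ∈ E.den α then leafOf E f a else leafOf E g a := rfl

@[simp] lemma leafOf_liftUn (op : Φ → Φ') (f : TT P Φ) (a : D) :
    leafOf E (liftUn op f) a = op (leafOf E f a) := by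
  induction f with
  | leaf φ => rfl
  | ite α f g ihf ihg => simp [liftUn, ihf, ihg, apply_ite op]

@[simp] lemma leafOf_liftBin (op : Φ → Φ → Φ') (f g : TT P Φ) (a : D) :
    leafOf E (liftBin op f g) a = op (leafOf E f a) (leafOf E g a) := by
  induction f generalizing g with
  | leaf φ =>
    induction g with
    | leaf ψ => simp [liftBin]
    | ite α g h ihg ihh => by_cases ha : a ∈ E.den α <;> simp [liftBin, ha, ihg, ihh]
  | ite α f g ihf ihg => by_cases ha : a ∈ E.den α <;> simp [liftBin, ha, ihf, ihg]

end LeafOf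

section Lang

variable {D P : Type*} (den : P → Set D)

lemma mem_lang_concat {r s : ERE P} {u : List D} :
    u ∈ lang den (.concat r s) ↔ ∃ x ∈ lang den r, ∃ y ∈ lang den s, u = x ++ y := Iff.rfl

lemma nullable_iff_nil_mem_lang (r : ERE P) : nullable r = true ↔ [] ∈ lang den r := by
  induction r with
  | pred α => simp [nullable, lang]
  | eps => simp [nullable, lang]
  | union r s ihr ihs => simp [nullable, lang, ihr, ihs]
  | inter r s ihr ihs => simp [nullable, lang, ihr, ihs]
  | concat r s ihr ihs => simp [nullable, mem_lang_concat, ihr, ihs, eq_comm (a := [])]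
  | star r => exact iff_of_true rfl ⟨[], by simp, rfl⟩
  | compl r ihr => simp [nullable, lang, ← ihr]

lemma cons_mem_lang_concat {r s : ERE P} {a : D} {x : List D} :
    a :: x ∈ lang den (.concat r s) ↔
      (∃ y z, a :: y ∈ lang den r ∧ z ∈ lang den s ∧ x = y ++ z) ∨
        ([] ∈ lang den r ∧ a :: x ∈ lang den s) := by
  constructor
  · rintro ⟨_ | ⟨b, y⟩, hr, z, hs, hx⟩
    · exact .inr ⟨hr, hx ▸ hs⟩
    · obtain ⟨rfl, rfl⟩ := List.cons_eq_cons.mp hx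
      exact .inl ⟨y, z, hr, hs, rfl⟩
  · rintro (⟨y, z, hr, hs, rfl⟩ | ⟨hr, hs⟩)
    · exact ⟨a :: y, hr, z, hs, rfl⟩
    · exact ⟨[], hr, a :: x, hs, rfl⟩

lemma cons_mem_lang_star {r : ERE P} {a : D} {x : List D} :
    a :: x ∈ lang den (.star r) ↔
      ∃ y z, a :: y ∈ lang den r ∧ z ∈ lang den (.star r) ∧ x = y ++ z := by
  constructor
  · rintro ⟨L, hL, hx⟩
    induction L with
    | nil => simp at hx
    | cons u L ih =>
      simp only [List.mem_cons, forall_eq_or_imp] at hL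
      rcases u with _ | ⟨b, y⟩
      · exact ih hL.2 hx
      · obtain ⟨rfl, rfl⟩ := List.cons_eq_cons.mp hx
        exact ⟨y, L.flatten, hL.1, ⟨L, hL.2, rfl⟩, rfl⟩
  · rintro ⟨y, z, hy, ⟨L, hL, rfl⟩, rfl⟩
    exact ⟨(a :: y) :: L, by simpa using ⟨hy, hL⟩, rfl⟩

end Lang

section InfiniteWords

variable {D : Type*}

@[simp] lemma consInf_zero (a : D) (w : ℕ → D) : consInf a w 0 = a := rfl

lemma consInf_inj {a b : D} {w v : ℕ → D} : consInf a w = consInf b v ↔ a = b ∧ w = v :=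
  ⟨fun h => ⟨congrFun h 0, funext fun i => congrFun h (i + 1)⟩, by rintro ⟨rfl, rfl⟩; rfl⟩

lemma consInf_eq_appendInf_iff {a : D} {w v : ℕ → D} {u : List D} :
    consInf a w = appendInf u v ↔
      (u = [] ∧ v = consInf a w) ∨ ∃ u', u = a :: u' ∧ w = appendInf u' v := by
  cases u with
  | nil => simp [appendInf, eq_comm]
  | cons b u => simp [appendInf, consInf_inj, eq_comm (a := a)]

end InfiniteWords

lemma mem_lang_leafOf_derive {D P : Type*} (E : EBA D P) (a : D) (R : ERE P) (x : List D) :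
    x ∈ lang E.den (leafOf E (derive E R) a) ↔ a :: x ∈ lang E.den R := by
  induction R generalizing x with
  | pred α => by_cases ha : a ∈ E.den α <;> simp [derive, lang, ha, E.den_bot]
  | eps => simp [derive, lang, E.den_bot]
  | union r s ihr ihs => simp [derive, lang, ihr, ihs]
  | inter r s ihr ihs => simp [derive, lang, ihr, ihs]
  | compl r ihr => simp [derive, lang, ihr]
  | star r ihr => simp [derive, mem_lang_concat, cons_mem_lang_star, ihr]
  | concat r s ihr ihs =>
    rw [cons_mem_lang_concat]
    by_cases hr : nullable r
    · simp [derive, hr, lang, ihr, ihs, (nullable_iff_nil_mem_lang E.den r).mp hr]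
    · simp [derive, hr, mem_lang_concat, ihr, ← nullable_iff_nil_mem_lang E.den r]

/-- Derivation is sound for the existential suffix implication:
`a·w ⊨ R ⟨ φ` iff (`a ∈ L(R)` and `a·w ⊨ φ`) or `w ⊨ leaf(δ(R),a) ⟨ φ`. -/
theorem eimpl_derive {D P : Type*} (E : EBA D P) (R : ERE P) (φ : RLTL P)
    (a : D) (w : ℕ → D) :
    RLTLsat E.den (consInf a w) (.eimpl R φ) ↔
      (([a] ∈ lang E.den R ∧ RLTLsat E.den (consInf a w) φ) ∨
       RLTLsat E.den w (.eimpl (leafOf E (derive E R) a) φ)) := by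
  simp only [RLTLsat, consInf_eq_appendInf_iff, mem_lang_leafOf_derive, or_and_right, exists_or]
  simp [exists_comm (α := List D)]
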